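/- arXiv:1702.06755 — 3 statements merged into one kernel-verified Lean document; each statement's English description precedes it below -/
import Mathlib

section
/- (Growth of ψ, consequence of (A2)) Let V be a real normed space, p ∈ (1,∞) with conjugate exponent p', C₂ > 0, and let ψ : V → [0,∞) be convex such that for every u ∈ V there exists a subgradient ξ_u ∈ V* of ψ at u with ‖ξ_u‖_{V*}^{p'} ≤ C₂(‖u‖_V^p + 1). Then there exists C₉ > 0 such that ψ(u) ≤ C₉(‖u‖_V^p + 1) for all u ∈ V. -/
/-!
Testing the subgradient inequality at `0` gives `ψ u ≤ ψ 0 + ‖ξ_u‖ ‖u‖`. Young's inequality with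
the conjugate exponents `p' = p / (p - 1)` and `p` splits the product into
`‖ξ_u‖ ^ p' / p' + ‖u‖ ^ p / p`, and by the assumed bound on `‖ξ_u‖ ^ p'` both terms are
`O(‖u‖ ^ p + 1)`.
-/

/-- `ξ` is a subgradient of the real-valued convex function `g` at `u`. -/
def HasSubgradientAt {V : Type*} [NormedAddCommGroup V] [NormedSpace ℝ V]
    (g : V → ℝ) (ξ : V →L[ℝ] ℝ) (u : V) : Prop :=
  ∀ v : V, g u + ξ (v - u) ≤ g v

namespace HasSubgradientAt

variable {V : Type*} [NormedAddCommGroup V] [NormedSpace ℝ V] {g : V → ℝ} {ξ : V →L[ℝ] ℝ}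
  {u : V}

theorem le_add_opNorm_mul_norm (h : HasSubgradientAt g ξ u) : g u ≤ g 0 + ‖ξ‖ * ‖u‖ := by
  have h0 := h 0
  rw [zero_sub, map_neg] at h0
  linarith [(le_abs_self (ξ u)).trans (ξ.le_opNorm u)]

theorem le_add_opNorm_rpow_div_add_norm_rpow_div {p q : ℝ} (hpq : p.HolderConjugate q)
    (h : HasSubgradientAt g ξ u) : g u ≤ g 0 + ‖ξ‖ ^ q / q + ‖u‖ ^ p / p := by
  linarith [h.le_add_opNorm_mul_norm,
    Real.young_inequality_of_nonneg (norm_nonneg ξ) (norm_nonneg u) hpq.symm]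

end HasSubgradientAt

theorem psi_growth_general
    {V : Type*} [NormedAddCommGroup V] [NormedSpace ℝ V]
    (p C₂ : ℝ) (hp : 1 < p)
    (ψ : V → ℝ)
    (hsub : ∀ u : V, ∃ ξ : V →L[ℝ] ℝ, HasSubgradientAt ψ ξ u ∧
      ‖ξ‖ ^ (p / (p - 1)) ≤ C₂ * (‖u‖ ^ p + 1)) :
    ∃ C₉ : ℝ, 0 < C₉ ∧ ∀ u : V, ψ u ≤ C₉ * (‖u‖ ^ p + 1) := by
  have hpq : p.HolderConjugate (p / (p - 1)) := Real.HolderConjugate.conjExponent hp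
  refine ⟨|ψ 0| + |C₂| + 1, by positivity, fun u => ?_⟩
  obtain ⟨ξ, hξ, hξ_norm⟩ := hsub u
  have hA : 1 ≤ ‖u‖ ^ p + 1 := le_add_of_nonneg_left (by positivity)
  have hψ0 : ψ 0 ≤ |ψ 0| * (‖u‖ ^ p + 1) :=
    (le_abs_self _).trans (le_mul_of_one_le_right (abs_nonneg _) hA)
  have hξ_term : ‖ξ‖ ^ (p / (p - 1)) / (p / (p - 1)) ≤ |C₂| * (‖u‖ ^ p + 1) :=
    calc _ ≤ ‖ξ‖ ^ (p / (p - 1)) := div_le_self (by positivity) hpq.symm.lt.le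
      _ ≤ C₂ * (‖u‖ ^ p + 1) := hξ_norm
      _ ≤ |C₂| * (‖u‖ ^ p + 1) := by gcongr; exact le_abs_self C₂
  have hu_term : ‖u‖ ^ p / p ≤ ‖u‖ ^ p + 1 :=
    (div_le_self (by positivity) hp.le).trans (le_add_of_nonneg_right zero_le_one)
  linarith [hξ.le_add_opNorm_rpow_div_add_norm_rpow_div hpq]

/-- **Growth of `ψ` (consequence of (A2)).** -/
theorem psi_growth
    {V : Type*} [NormedAddCommGroup V] [NormedSpace ℝ V]
    (p C₂ : ℝ) (hp : 1 < p) (hC₂ : 0 < C₂)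
    (ψ : V → ℝ) (hψ_nonneg : ∀ v, 0 ≤ ψ v) (hψ_conv : ConvexOn ℝ Set.univ ψ)
    (hsub : ∀ u : V, ∃ ξ : V →L[ℝ] ℝ, HasSubgradientAt ψ ξ u ∧
      ‖ξ‖ ^ (p / (p - 1)) ≤ C₂ * (‖u‖ ^ p + 1)) :
    ∃ C₉ : ℝ, 0 < C₉ ∧ ∀ u : V, ψ u ≤ C₉ * (‖u‖ ^ p + 1) :=
  psi_growth_general p C₂ hp ψ hsub
end

section
/- (Integrated power inequality) Let V be a real Banach space, p ∈ (1,∞) with conjugate exponent p', μ > 0, T > 0, and let w : [0,T] → V and w' : [0,T] → V be such that w' is Bochner integrable on (0,T), ∫₀ᵀ ‖w'(s)‖_V^p ds < ∞, and w(t) = w(0) + ∫₀ᵗ w'(s) ds for all t ∈ [0,T]. Then for every t ∈ [0,T]: μ‖w(t)‖_V^p ≤ μ‖w(0)‖_V^p + (p−1)μ^{p'} ∫₀ᵗ ‖w(s)‖_V^p ds + ∫₀ᵗ ‖w'(s)‖_V^p ds. -/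
/-!
Put `f = ‖w‖` and `g = ‖w'‖`, so that `f v ≤ f u + ∫ u..v, g`. The chain-rule inequality
`f t ^ p ≤ f 0 ^ p + ∫ 0..t, p f ^ (p - 1) g` follows by continuous induction: on a short interval
`(x, z]` with `∫ x..z, g < ε`, convexity of `y ↦ y ^ p` gives
`f z ^ p - f x ^ p ≤ p f z ^ (p - 1) ∫ x..z, g ≤ ∫ x..z, p (f + ε) ^ (p - 1) g`, and `ε → 0` by
dominated convergence. Multiplying by `μ`, Young's inequality
`p a ^ (p - 1) b ≤ (p - 1) a ^ p + b ^ p` with `a = μ ^ (1 / (p - 1)) f` and `b = g` finishes.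
-/

open MeasureTheory Set Filter Topology intervalIntegral

theorem mul_rpow_sub_one_mul_le {p a b : ℝ} (hp : 1 ≤ p) (ha : 0 ≤ a) (hb : 0 ≤ b) :
    p * a ^ (p - 1) * b ≤ (p - 1) * a ^ p + b ^ p := by
  rcases hp.eq_or_lt with rfl | hp
  · simp
  have hpq := (Real.HolderConjugate.conjExponent hp).symm
  have hyoung := Real.young_inequality_of_nonneg (Real.rpow_nonneg ha (p - 1)) hb hpq
  rw [← Real.rpow_mul ha, Real.conjExponent, mul_div_cancel₀ _ (by linarith : p - 1 ≠ 0),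
    div_div_eq_mul_div] at hyoung
  have hp0 : 0 < p := by linarith
  calc p * a ^ (p - 1) * b = p * (a ^ (p - 1) * b) := by ring
    _ ≤ p * (a ^ p * (p - 1) / p + b ^ p / p) := by gcongr
    _ = (p - 1) * a ^ p + b ^ p := by field_simp

theorem rpow_sub_rpow_le_mul_rpow_sub_one {p a b : ℝ} (hp : 1 ≤ p) (ha : 0 ≤ a) (hb : 0 ≤ b) :
    b ^ p - a ^ p ≤ p * b ^ (p - 1) * (b - a) := by
  have hbp : b ^ (p - 1) * b = b ^ p := by
    conv_lhs => enter [2]; rw [← Real.rpow_one b]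
    rw [← Real.rpow_add' hb (by linarith), sub_add_cancel]
  have hexpand : p * b ^ (p - 1) * (b - a) = p * b ^ p - p * b ^ (p - 1) * a := by
    rw [← hbp]; ring
  linarith [mul_rpow_sub_one_mul_le hp hb ha]

theorem young_mul_rpow_sub_one_le {p μ a b : ℝ} (hp : 1 < p) (hμ : 0 ≤ μ) (ha : 0 ≤ a)
    (hb : 0 ≤ b) :
    μ * (p * a ^ (p - 1) * b) ≤ (p - 1) * μ ^ (p / (p - 1)) * a ^ p + b ^ p := by
  have key := mul_rpow_sub_one_mul_le hp.le (mul_nonneg (Real.rpow_nonneg hμ (1 / (p - 1))) ha) hb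
  rw [Real.mul_rpow (Real.rpow_nonneg hμ _) ha, Real.mul_rpow (Real.rpow_nonneg hμ _) ha,
    ← Real.rpow_mul hμ, ← Real.rpow_mul hμ, one_div_mul_cancel (by linarith), Real.rpow_one,
    one_div_mul_eq_div] at key
  linarith

theorem IntervalIntegrable.mono_Icc {E : Type*} [NormedAddCommGroup E] {f : ℝ → E} {a b u v : ℝ}
    (hf : IntervalIntegrable f volume a b) (hu : u ∈ Icc a b) (hv : v ∈ Icc a b) :
    IntervalIntegrable f volume u v :=
  hf.mono_set (uIcc_subset_uIcc (Icc_subset_uIcc hu) (Icc_subset_uIcc hv))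

theorem sub_le_integral_of_eventually_sub_le_integral {F ρ : ℝ → ℝ} {a b : ℝ} (hab : a ≤ b)
    (hF : ContinuousOn F (Icc a b)) (hρ : IntervalIntegrable ρ volume a b)
    (hstep : ∀ x ∈ Ico a b, ∀ᶠ z in 𝓝[>] x, F z - F x ≤ ∫ s in x..z, ρ s) :
    F b - F a ≤ ∫ s in a..b, ρ s := by
  set S := {x | F x - ∫ s in a..x, ρ s ≤ F a}
  have hclosed : IsClosed (S ∩ Icc a b) := by
    rw [inter_comm]
    refine (hF.sub ?_).preimage_isClosed_of_isClosed isClosed_Icc isClosed_Iic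
    simpa [uIcc_of_le hab] using continuousOn_primitive_interval' hρ left_mem_uIcc
  have hb : b ∈ S := by
    refine hclosed.Icc_subset_of_forall_exists_gt (by simp [S]) ?_ ⟨hab, le_rfl⟩
    rintro x ⟨hxS, hx⟩ y hy
    obtain ⟨z, hz, hxz⟩ := ((hstep x hx).and (Ioo_mem_nhdsGT (lt_min hy hx.2))).exists
    have hzab : z ∈ Icc a b := ⟨hx.1.trans hxz.1.le, hxz.2.le.trans (min_le_right _ _)⟩
    refine ⟨z, ?_, hxz.1, hxz.2.le.trans (min_le_left _ _)⟩
    have := integral_add_adjacent_intervals (hρ.mono_Icc ⟨le_rfl, hab⟩ (Ico_subset_Icc_self hx))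
      (hρ.mono_Icc (Ico_subset_Icc_self hx) hzab)
    simp only [S, mem_ofPred_eq] at hxS ⊢
    linarith
  simp only [S, mem_ofPred_eq] at hb
  linarith

section ChainRuleInequality

variable {f g : ℝ → ℝ} {a b p ε : ℝ}

theorem intervalIntegrable_mul_rpow_add_mul (hp : 1 ≤ p) (hab : a ≤ b)
    (hf : ContinuousOn f (Icc a b)) (hg : IntervalIntegrable g volume a b) :
    IntervalIntegrable (fun s => p * (f s + ε) ^ (p - 1) * g s) volume a b := by
  refine hg.continuousOn_mul (continuousOn_const.mul ?_)
  rw [uIcc_of_le hab]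
  exact (hf.add continuousOn_const).rpow_const fun _ _ => Or.inr (by linarith)

variable (hf : ContinuousOn f (Icc a b)) (hf0 : ∀ x, 0 ≤ f x) (hg0 : ∀ x, 0 ≤ g x)
  (hg : IntervalIntegrable g volume a b)
  (hfg : ∀ u v, a ≤ u → u ≤ v → v ≤ b → f v ≤ f u + ∫ s in u..v, g s)
include hf hf0 hg0 hg hfg

-- `ε` absorbs the oscillation of `f` on `(x, z]`, which is at most `∫ x..z, g`
theorem eventually_rpow_sub_rpow_le_integral (hp : 1 ≤ p) (hε : 0 < ε) {x : ℝ}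
    (hx : x ∈ Ico a b) :
    ∀ᶠ z in 𝓝[>] x, f z ^ p - f x ^ p ≤ ∫ s in x..z, p * (f s + ε) ^ (p - 1) * g s := by
  have hgxb : IntervalIntegrable g volume x b :=
    hg.mono_Icc (Ico_subset_Icc_self hx) ⟨hx.1.trans hx.2.le, le_rfl⟩
  have hprim : ContinuousWithinAt (fun z => ∫ s in x..z, g s) (Ioi x) x :=
    ((continuousOn_primitive_interval' hgxb left_mem_uIcc) x left_mem_uIcc).mono_of_mem_nhdsWithin
      (by simpa [uIcc_of_le hx.2.le] using Icc_mem_nhdsGT hx.2)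
  have hsmall : ∀ᶠ z in 𝓝[>] x, ∫ s in x..z, g s < ε := by
    simpa using hprim.tendsto.eventually (gt_mem_nhds (by simpa using hε))
  filter_upwards [hsmall, Ioo_mem_nhdsGT hx.2] with z hz hzb
  have hxz := hzb.1.le
  have hgxz : IntervalIntegrable g volume x z :=
    hg.mono_Icc (Ico_subset_Icc_self hx) ⟨hx.1.trans hxz, hzb.2.le⟩
  have hfz : ∀ s ∈ Icc x z, f z ≤ f s + ε := fun s hs => by
    have := integral_mono_interval hs.1 hs.2 le_rfl (Eventually.of_forall hg0) hgxz
    linarith [hfg s z (hx.1.trans hs.1) hs.2 hzb.2.le]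
  calc f z ^ p - f x ^ p ≤ p * f z ^ (p - 1) * (f z - f x) :=
        rpow_sub_rpow_le_mul_rpow_sub_one hp (hf0 x) (hf0 z)
    _ ≤ p * f z ^ (p - 1) * ∫ s in x..z, g s := by
        gcongr
        · exact mul_nonneg (by linarith) (Real.rpow_nonneg (hf0 z) _)
        · linarith [hfg x z hx.1 hxz hzb.2.le]
    _ = ∫ s in x..z, p * f z ^ (p - 1) * g s := (intervalIntegral.integral_const_mul _ _).symm
    _ ≤ ∫ s in x..z, p * (f s + ε) ^ (p - 1) * g s := by
        refine integral_mono_on hxz (hgxz.const_mul _) (intervalIntegrable_mul_rpow_add_mul hp hxz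
          (hf.mono (Icc_subset_Icc hx.1 hzb.2.le)) hgxz) fun s hs => ?_
        exact mul_le_mul_of_nonneg_right (mul_le_mul_of_nonneg_left
          (Real.rpow_le_rpow (hf0 z) (hfz s hs) (by linarith)) (by linarith)) (hg0 s)

theorem rpow_le_rpow_add_integral_of_pos (hp : 1 ≤ p) (hε : 0 < ε) (hab : a ≤ b) :
    f b ^ p ≤ f a ^ p + ∫ s in a..b, p * (f s + ε) ^ (p - 1) * g s := by
  have := sub_le_integral_of_eventually_sub_le_integral hab
    (hf.rpow_const fun _ _ => Or.inr (by linarith))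
    (intervalIntegrable_mul_rpow_add_mul (ε := ε) hp hab hf hg)
    fun x hx => eventually_rpow_sub_rpow_le_integral hf hf0 hg0 hg hfg hp hε hx
  linarith

theorem rpow_le_rpow_add_integral (hp : 1 ≤ p) (hab : a ≤ b) :
    f b ^ p ≤ f a ^ p + ∫ s in a..b, p * f s ^ (p - 1) * g s := by
  obtain ⟨C, hC⟩ := isCompact_Icc.exists_bound_of_continuousOn hf
  have hlim : Tendsto (fun ε => ∫ s in a..b, p * (f s + ε) ^ (p - 1) * g s) (𝓝[>] 0)
      (𝓝 (∫ s in a..b, p * f s ^ (p - 1) * g s)) := by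
    refine tendsto_integral_filter_of_dominated_convergence (fun s => p * (C + 1) ^ (p - 1) * g s)
      (Eventually.of_forall fun ε =>
        (intervalIntegrable_mul_rpow_add_mul hp hab hf hg).def'.aestronglyMeasurable) ?_
      (hg.const_mul _) (Eventually.of_forall fun s _ => ?_)
    · filter_upwards [Ioo_mem_nhdsGT one_pos] with ε hε
      refine Eventually.of_forall fun s hs => ?_
      rw [uIoc_of_le hab] at hs
      have hfs := (le_abs_self _).trans (hC s (Ioc_subset_Icc_self hs))
      have hfε : 0 ≤ f s + ε := by linarith [hf0 s, hε.1]
      rw [Real.norm_of_nonneg (by have := Real.rpow_nonneg hfε (p - 1); have := hg0 s; positivity)]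
      exact mul_le_mul_of_nonneg_right (mul_le_mul_of_nonneg_left
        (Real.rpow_le_rpow hfε (by linarith [hε.2]) (by linarith)) (by linarith)) (hg0 s)
    · have hcont : Continuous fun ε : ℝ => p * (f s + ε) ^ (p - 1) * g s :=
        ((continuous_const.add continuous_id).rpow_const fun _ => Or.inr (by linarith)).const_mul p
          |>.mul continuous_const
      simpa using (hcont.tendsto 0).mono_left nhdsWithin_le_nhds
  have := ge_of_tendsto hlim (eventually_nhdsWithin_of_forall fun ε (hε : 0 < ε) =>
    sub_le_iff_le_add'.2 (rpow_le_rpow_add_integral_of_pos hf hf0 hg0 hg hfg hp hε hab))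
  linarith

end ChainRuleInequality

section VectorValued

variable {V : Type*} [NormedAddCommGroup V] [NormedSpace ℝ V] {w w' : ℝ → V} {a b : ℝ}

theorem continuousOn_of_eq_add_integral (hw' : IntervalIntegrable w' volume a b)
    (hrep : ∀ t ∈ Icc a b, w t = w a + ∫ s in a..t, w' s) : ContinuousOn w (Icc a b) :=
  (continuousOn_const.add ((continuousOn_primitive_interval' hw' left_mem_uIcc).mono
    Icc_subset_uIcc)).congr hrep

theorem norm_le_norm_add_integral_of_eq_add_integral (hw' : IntervalIntegrable w' volume a b)
    (hrep : ∀ t ∈ Icc a b, w t = w a + ∫ s in a..t, w' s) {u v : ℝ} (hau : a ≤ u) (huv : u ≤ v)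
    (hvb : v ≤ b) : ‖w v‖ ≤ ‖w u‖ + ∫ s in u..v, ‖w' s‖ := by
  have hu : u ∈ Icc a b := ⟨hau, huv.trans hvb⟩
  have hv : v ∈ Icc a b := ⟨hau.trans huv, hvb⟩
  have ha : a ∈ Icc a b := ⟨le_rfl, hu.1.trans hu.2⟩
  have hincr : w v - w u = ∫ s in u..v, w' s := by
    rw [hrep v hv, hrep u hu, add_sub_add_left_eq_sub,
      integral_interval_sub_left (hw'.mono_Icc ha hv) (hw'.mono_Icc ha hu)]
  calc ‖w v‖ ≤ ‖w u‖ + ‖w v - w u‖ := norm_le_norm_add_norm_sub' _ _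
    _ ≤ ‖w u‖ + ∫ s in u..v, ‖w' s‖ := by
      rw [hincr]; gcongr; exact norm_integral_le_integral_norm huv

theorem norm_rpow_le_add_integral_of_eq_add_integral {p : ℝ} (hp : 1 ≤ p) (hab : a ≤ b)
    (hw' : IntervalIntegrable w' volume a b)
    (hrep : ∀ t ∈ Icc a b, w t = w a + ∫ s in a..t, w' s) :
    ‖w b‖ ^ p ≤ ‖w a‖ ^ p + ∫ s in a..b, p * ‖w s‖ ^ (p - 1) * ‖w' s‖ :=
  rpow_le_rpow_add_integral (continuousOn_of_eq_add_integral hw' hrep).norm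
    (fun _ => norm_nonneg _) (fun _ => norm_nonneg _) hw'.norm
    (fun _ _ => norm_le_norm_add_integral_of_eq_add_integral hw' hrep) hp hab

end VectorValued

theorem integrated_power_inequality_general
    {V : Type*} [NormedAddCommGroup V] [NormedSpace ℝ V]
    (p μ T : ℝ) (hp : 1 < p) (hμ : 0 < μ)
    (w w' : ℝ → V)
    (hw'int : IntegrableOn w' (Ioc 0 T))
    (hw'p : IntegrableOn (fun s => ‖w' s‖ ^ p) (Ioc 0 T))
    (hrep : ∀ t ∈ Icc (0:ℝ) T, w t = w 0 + ∫ s in Ioc (0:ℝ) t, w' s) :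
    ∀ t ∈ Icc (0:ℝ) T,
      μ * ‖w t‖ ^ p ≤
        μ * ‖w 0‖ ^ p + (p - 1) * μ ^ (p / (p - 1)) * (∫ s in Ioc (0:ℝ) t, ‖w s‖ ^ p)
          + ∫ s in Ioc (0:ℝ) t, ‖w' s‖ ^ p := by
  rintro t ⟨ht0, htT⟩
  have hIoc : Ioc 0 t ⊆ Ioc 0 T := Ioc_subset_Ioc le_rfl htT
  have hw' : IntervalIntegrable w' volume 0 t :=
    (intervalIntegrable_iff_integrableOn_Ioc_of_le ht0).2 (hw'int.mono_set hIoc)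
  have hrep' : ∀ s ∈ Icc 0 t, w s = w 0 + ∫ σ in 0..s, w' σ := fun s hs => by
    rw [integral_of_le hs.1]; exact hrep s ⟨hs.1, hs.2.trans htT⟩
  have hw := (continuousOn_of_eq_add_integral hw' hrep').norm
  have hchain := norm_rpow_le_add_integral_of_eq_add_integral hp.le ht0 hw' hrep'
  have hyoung : μ * ∫ s in 0..t, p * ‖w s‖ ^ (p - 1) * ‖w' s‖ ≤
      (p - 1) * μ ^ (p / (p - 1)) * (∫ s in 0..t, ‖w s‖ ^ p) + ∫ s in 0..t, ‖w' s‖ ^ p := by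
    have hwp := (hw.rpow_const (p := p) fun _ _ => Or.inr (by linarith)).intervalIntegrable_of_Icc
      (μ := volume) ht0
    have hw'p' := (intervalIntegrable_iff_integrableOn_Ioc_of_le ht0).2 (hw'p.mono_set hIoc)
    rw [← intervalIntegral.integral_const_mul, ← intervalIntegral.integral_const_mul,
      ← integral_add (hwp.const_mul _) hw'p']
    refine integral_mono_on ht0 ?_ ((hwp.const_mul _).add hw'p') fun s _ =>
      young_mul_rpow_sub_one_le hp hμ.le (norm_nonneg _) (norm_nonneg _)
    simpa using (intervalIntegrable_mul_rpow_add_mul (ε := 0) hp.le ht0 hw hw'.norm).const_mul μ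
  rw [← integral_of_le ht0, ← integral_of_le ht0]
  linarith [mul_le_mul_of_nonneg_left hchain hμ.le]

/-- **Integrated power inequality.** -/
theorem integrated_power_inequality
    {V : Type*} [NormedAddCommGroup V] [NormedSpace ℝ V] [CompleteSpace V]
    (p μ T : ℝ) (hp : 1 < p) (hμ : 0 < μ) (hT : 0 < T)
    (w w' : ℝ → V)
    (hw'int : IntegrableOn w' (Ioc 0 T))
    (hw'p : IntegrableOn (fun s => ‖w' s‖ ^ p) (Ioc 0 T))
    (hrep : ∀ t ∈ Icc (0:ℝ) T, w t = w 0 + ∫ s in Ioc (0:ℝ) t, w' s) :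
    ∀ t ∈ Icc (0:ℝ) T,
      μ * ‖w t‖ ^ p ≤
        μ * ‖w 0‖ ^ p + (p - 1) * μ ^ (p / (p - 1)) * (∫ s in Ioc (0:ℝ) t, ‖w s‖ ^ p)
          + ∫ s in Ioc (0:ℝ) t, ‖w' s‖ ^ p :=
  integrated_power_inequality_general p μ T hp hμ w w' hw'int hw'p hrep
end

section
/- (Demicontinuity of the Yosida approximation) Let V be a separable, reflexive, strictly convex real Banach space whose dual V* is strictly convex (reflexivity meaning the canonical embedding of V into its double dual is surjective), let p ∈ (1,∞), λ > 0, and let φ : V → [0,∞] be a proper, lower semicontinuous, convex function with φ(0) < ∞. For u ∈ V call (v, ξ) ∈ V × V* a resolvent pair for u if ξ is a subgradient of w ↦ ‖w‖_V^p/p at (v−u)/λ and −ξ is a subgradient of φ at v. Suppose u_n → u strongly in V, that (v_n, ξ_n) is a resolvent pair for u_n for each n, and that (v, ξ) is a resolvent pair for u. Then v_n → v weakly in V (⟨g, v_n⟩ → ⟨g, v⟩ for all g ∈ V*) and ξ_n → ξ weakly in V* (⟨ξ_n, z⟩ → ⟨ξ, z⟩ for all z ∈ V). -/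
open Filter ENNReal

/-- `ξ` is a subgradient of the `[0,∞]`-valued convex function `φ` at `u`. -/
def ESubgradientAt {V : Type*} [NormedAddCommGroup V] [NormedSpace ℝ V]
    (φ : V → ℝ≥0∞) (u : V) (ξ : V →L[ℝ] ℝ) : Prop :=
  φ u ≠ ⊤ ∧ ∀ v : V, φ v ≠ ⊤ → (φ u).toReal + ξ (v - u) ≤ (φ v).toReal

/-- `(v, ξ)` is a resolvent pair for `u` (with parameters `p`, `lam`):
`ξ` is a subgradient of `w ↦ ‖w‖^p/p` at `(v - u)/lam` and `-ξ` is a subgradient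
of `φ` at `v`. -/
def IsResolventPair {V : Type*} [NormedAddCommGroup V] [NormedSpace ℝ V]
    (p lam : ℝ) (φ : V → ℝ≥0∞) (u v : V) (ξ : V →L[ℝ] ℝ) : Prop :=
  HasSubgradientAt (fun w : V => ‖w‖ ^ p / p) ξ (lam⁻¹ • (v - u)) ∧
    ESubgradientAt φ v (-ξ)

/-!
Put `w = (v - u)/λ` and `wₙ = (vₙ - uₙ)/λ`; then `ξ` is the value of the duality map at `w`:
`ξ w = ‖w‖^p` and `‖ξ‖ ≤ ‖w‖^(p-1)`. Testing `-ξₙ ∈ ∂φ(vₙ)` against `0` bounds `wₙ`, since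
`φ 0 < ∞`. Monotonicity of `∂φ` and of the duality map squeeze `⟨ξₙ - ξ, wₙ - w⟩` between `0` and
`O(‖uₙ - u‖)`. This pairing is a sum of three nonnegative gaps,
`(‖wₙ‖^(p-1) ‖w‖ - ξₙ w) + (‖w‖^(p-1) ‖wₙ‖ - ξ wₙ) + (‖wₙ‖^(p-1) - ‖w‖^(p-1)) (‖wₙ‖ - ‖w‖)`,
so `‖wₙ‖ → ‖w‖`, `ξₙ w → ‖w‖^p` and `ξ wₙ → ‖w‖^p`. By Banach–Alaoglu in `V*` and in `V**`
(where reflexivity identifies cluster points with points of `V`) every cluster point of `(ξₙ)`,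
resp. `(wₙ)`, attains the same values as `ξ`, resp. `w`, under norm constraints that strict
convexity turns into equality; hence the sequences converge weakly.
-/

open Topology

theorem le_of_hasDerivAt_of_eventually_add_mul_le {f : ℝ → ℝ} {x c d : ℝ}
    (hf : HasDerivAt f d x) (h : ∀ᶠ t in 𝓝[>] 0, f x + t * c ≤ f (x + t)) : c ≤ d := by
  refine ge_of_tendsto hf.tendsto_slope_zero_right ?_
  filter_upwards [h, self_mem_nhdsWithin] with t ht (htpos : 0 < t)
  rw [smul_eq_mul, le_inv_mul_iff₀ htpos]
  linarith

theorem Real.rpow_sub_one_mul_self {x p : ℝ} (hx : 0 ≤ x) (hp : p ≠ 0) :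
    x ^ (p - 1) * x = x ^ p := by
  rw [← Real.rpow_add_one' hx (by simpa using hp), sub_add_cancel]

theorem Real.rpow_sub_rpow_mul_sub_nonneg {a b q : ℝ} (ha : 0 ≤ a) (hb : 0 ≤ b) (hq : 0 ≤ q) :
    0 ≤ (a ^ q - b ^ q) * (a - b) := by
  rcases le_total a b with h | h
  · exact mul_nonneg_of_nonpos_of_nonpos (sub_nonpos.2 (Real.rpow_le_rpow ha h hq))
      (sub_nonpos.2 h)
  · exact mul_nonneg (sub_nonneg.2 (Real.rpow_le_rpow hb h hq)) (sub_nonneg.2 h)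

theorem Real.eq_of_rpow_sub_rpow_mul_sub_eq_zero {a b q : ℝ} (ha : 0 ≤ a) (hb : 0 ≤ b)
    (hq : q ≠ 0) (h : (a ^ q - b ^ q) * (a - b) = 0) : a = b := by
  rcases mul_eq_zero.1 h with h | h
  · exact Real.rpow_left_injOn hq ha hb (sub_eq_zero.1 h)
  · exact sub_eq_zero.1 h

theorem MapClusterPt.eq_of_tendsto {X ι : Type*} [TopologicalSpace X] [T2Space X] {x c : X}
    {l : Filter ι} {f : ι → X} (hx : MapClusterPt x l f) (hf : Tendsto f l (𝓝 c)) : x = c := by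
  by_contra hne
  exact hx.ne ((disjoint_nhds_nhds.2 hne).mono_right hf).eq_bot

theorem tendsto_of_rpow_sub_rpow_mul_sub_tendsto_zero {ι : Type*} {l : Filter ι} {a : ι → ℝ}
    {b q R : ℝ} (hb : 0 ≤ b) (hq : 0 < q) (ha : ∀ i, a i ∈ Set.Icc 0 R)
    (h : Tendsto (fun i => (a i ^ q - b ^ q) * (a i - b)) l (𝓝 0)) : Tendsto a l (𝓝 b) := by
  refine isCompact_Icc.tendsto_nhds_of_unique_mapClusterPt (Eventually.of_forall ha)
    fun x hx hcl => ?_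
  have hcont : Continuous fun y : ℝ => (y ^ q - b ^ q) * (y - b) := by
    have := Real.continuous_rpow_const hq.le
    fun_prop
  exact Real.eq_of_rpow_sub_rpow_mul_sub_eq_zero hx.1 hb hq.ne'
    ((hcl.continuousAt_comp hcont.continuousAt).eq_of_tendsto h)

namespace WeakDual

variable {𝕜 E ι : Type*} [RCLike 𝕜] [NormedAddCommGroup E] [NormedSpace 𝕜 E] {l : Filter ι}
  {f : ι → WeakDual 𝕜 E}

theorem tendsto_of_unique_mapClusterPt {η : WeakDual 𝕜 E} {R : ℝ}
    (hf : ∀ᶠ i in l, ‖toStrongDual (f i)‖ ≤ R) (h : ∀ ζ, MapClusterPt ζ l f → ζ = η) :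
    Tendsto f l (𝓝 η) :=
  (isCompact_closedBall 0 R).tendsto_nhds_of_unique_mapClusterPt (by simpa using hf)
    fun ζ _ hζ => h ζ hζ

theorem norm_le_of_mapClusterPt {ζ : WeakDual 𝕜 E} (hζ : MapClusterPt ζ l f) {r : ι → ℝ}
    {ρ : ℝ} (hf : ∀ i, ‖toStrongDual (f i)‖ ≤ r i) (hr : Tendsto r l (𝓝 ρ)) :
    ‖toStrongDual ζ‖ ≤ ρ := by
  refine le_of_forall_pos_le_add fun ε hε => ?_
  have hev : ∀ᶠ i in l, f i ∈ toStrongDual ⁻¹' Metric.closedBall 0 (ρ + ε) :=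
    (hr.eventually (gt_mem_nhds (lt_add_of_pos_right ρ hε))).mono fun i hi => by
      simpa using (hf i).trans hi.le
  simpa using (isClosed_closedBall 0 (ρ + ε)).mem_of_mapClusterPt hζ hev

theorem apply_eq_of_mapClusterPt {ζ : WeakDual 𝕜 E} (hζ : MapClusterPt ζ l f) {x : E} {c : 𝕜}
    (hx : Tendsto (fun i => f i x) l (𝓝 c)) : ζ x = c :=
  (hζ.continuousAt_comp (eval_continuous x).continuousAt).eq_of_tendsto hx

end WeakDual

theorem eq_of_norm_le_of_apply_eq_mul {X : Type*} [NormedAddCommGroup X] [NormedSpace ℝ X]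
    [StrictConvexSpace ℝ X] (f : X →L[ℝ] ℝ) {c r : ℝ} (hc : 0 < c) (hf : ∀ z, f z ≤ c * ‖z‖)
    {x y : X} (hx : ‖x‖ ≤ r) (hy : ‖y‖ ≤ r) (hfx : f x = c * r) (hfy : f y = c * r) : x = y := by
  by_contra hne
  have hmid := norm_combo_lt_of_ne hx hy hne (half_pos one_pos) (half_pos one_pos) (add_halves 1)
  have := hf ((1 / 2 : ℝ) • x + (1 / 2 : ℝ) • y)
  rw [map_add, map_smul, map_smul, hfx, hfy, smul_eq_mul] at this
  nlinarith

namespace HasSubgradientAt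

variable {V : Type*} [NormedAddCommGroup V] [NormedSpace ℝ V] {p : ℝ} {w : V} {ξ : V →L[ℝ] ℝ}

theorem sub_apply_sub_nonneg {g : V → ℝ} {x y : V} {ξ η : V →L[ℝ] ℝ}
    (hξ : HasSubgradientAt g ξ x) (hη : HasSubgradientAt g η y) : 0 ≤ (ξ - η) (x - y) := by
  have hx := hξ y
  have hy := hη x
  rw [← neg_sub, map_neg] at hx
  rw [sub_apply]
  linarith

variable (hp : 1 < p) (h : HasSubgradientAt (fun w : V => ‖w‖ ^ p / p) ξ w)
include hp h

theorem apply_le_rpow_mul_norm (z : V) : ξ z ≤ ‖w‖ ^ (p - 1) * ‖z‖ := by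
  -- `ξ z` is at most the right derivative at `0` of `t ↦ ‖w + t • z‖^p/p ≤ (‖w‖ + t‖z‖)^p/p`
  have hderiv : HasDerivAt (fun t : ℝ => (‖w‖ + t * ‖z‖) ^ p / p) (‖w‖ ^ (p - 1) * ‖z‖) 0 := by
    refine ((((hasDerivAt_id' (0 : ℝ)).mul_const ‖z‖).const_add ‖w‖).rpow_const
      (Or.inr hp.le)).div_const p |>.congr_deriv ?_
    simp only [one_mul, zero_mul, add_zero]
    field_simp
  refine le_of_hasDerivAt_of_eventually_add_mul_le hderiv
    (eventually_nhdsWithin_of_forall fun t (ht : 0 < t) => ?_)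
  have hsub := h (w + t • z)
  rw [add_sub_cancel_left, map_smul, smul_eq_mul] at hsub
  have hnorm : ‖w + t • z‖ ≤ ‖w‖ + t * ‖z‖ := by
    simpa [norm_smul, abs_of_pos ht] using norm_add_le w (t • z)
  simp only [zero_mul, add_zero, zero_add]
  calc ‖w‖ ^ p / p + t * ξ z ≤ ‖w + t • z‖ ^ p / p := hsub
    _ ≤ (‖w‖ + t * ‖z‖) ^ p / p := by gcongr

theorem norm_le : ‖ξ‖ ≤ ‖w‖ ^ (p - 1) := by
  refine ξ.opNorm_le_bound (by positivity) fun z => abs_le.2 ⟨?_, apply_le_rpow_mul_norm hp h z⟩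
  have := apply_le_rpow_mul_norm hp h (-z)
  rw [map_neg, norm_neg] at this
  linarith

theorem apply_self : ξ w = ‖w‖ ^ p := by
  have hp0 : p ≠ 0 := by linarith
  refine le_antisymm ?_ (neg_le_neg_iff.1 ?_)
  · calc ξ w ≤ ‖w‖ ^ (p - 1) * ‖w‖ := apply_le_rpow_mul_norm hp h w
      _ = ‖w‖ ^ p := Real.rpow_sub_one_mul_self (norm_nonneg w) hp0
  -- the same comparison in the direction `-w`, where `‖w - t • w‖^p/p = (1 - t)^p ‖w‖^p/p`
  have hderiv : HasDerivAt (fun t : ℝ => (1 - t) ^ p * (‖w‖ ^ p / p)) (-‖w‖ ^ p) 0 := by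
    refine (((hasDerivAt_id' (0 : ℝ)).const_sub 1).rpow_const (Or.inr hp.le)).mul_const
      (‖w‖ ^ p / p) |>.congr_deriv ?_
    simp only [neg_mul, one_mul, sub_zero, Real.one_rpow, mul_one, neg_inj]
    field_simp
  refine le_of_hasDerivAt_of_eventually_add_mul_le hderiv ?_
  filter_upwards [Ioo_mem_nhdsGT one_pos] with t ht
  have hsub := h ((1 - t) • w)
  simp only at hsub
  rw [norm_smul, sub_smul, one_smul, sub_sub_cancel_left, map_neg, map_smul, smul_eq_mul,
    Real.norm_of_nonneg (by linarith [ht.2]), Real.mul_rpow (by linarith [ht.2]) (norm_nonneg w)]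
    at hsub
  rw [sub_zero, Real.one_rpow, zero_add, one_mul, ← mul_div_assoc]
  linarith

theorem eq_of_norm_le_of_apply_self [StrictConvexSpace ℝ (V →L[ℝ] ℝ)] {η : V →L[ℝ] ℝ}
    (hη : ‖η‖ ≤ ‖w‖ ^ (p - 1)) (hηw : η w = ‖w‖ ^ p) : η = ξ := by
  rcases eq_or_ne w 0 with rfl | hw
  · have hξ := h.norm_le hp
    rw [norm_zero, Real.zero_rpow (by linarith)] at hη hξ
    rw [norm_le_zero_iff.1 hη, norm_le_zero_iff.1 hξ]
  have hnorm : ‖w‖ ^ p = ‖w‖ * ‖w‖ ^ (p - 1) :=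
    (mul_comm _ _).trans (Real.rpow_sub_one_mul_self (norm_nonneg w) (by linarith)) |>.symm
  refine eq_of_norm_le_of_apply_eq_mul (NormedSpace.inclusionInDoubleDual ℝ V w)
    (norm_pos_iff.2 hw) (fun ζ => ?_) hη (h.norm_le hp) (hηw.trans hnorm)
    ((h.apply_self hp).trans hnorm)
  exact (le_abs_self _).trans ((ζ.le_opNorm w).trans_eq (mul_comm _ _))

theorem eq_of_norm_le_of_apply [StrictConvexSpace ℝ V] {x : V} (hx : ‖x‖ ≤ ‖w‖)
    (hξx : ξ x = ‖w‖ ^ p) : x = w := by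
  rcases eq_or_ne w 0 with rfl | hw
  · simpa using hx
  have hnorm : ‖w‖ ^ p = ‖w‖ ^ (p - 1) * ‖w‖ :=
    (Real.rpow_sub_one_mul_self (norm_nonneg w) (by linarith)).symm
  exact eq_of_norm_le_of_apply_eq_mul ξ (Real.rpow_pos_of_pos (norm_pos_iff.2 hw) _)
    (h.apply_le_rpow_mul_norm hp) hx le_rfl (hξx.trans hnorm) ((h.apply_self hp).trans hnorm)

variable {ι : Type*} {l : Filter ι}

theorem tendsto_of_sub_apply_sub_tendsto_zero {wn : ι → V} {ξn : ι → V →L[ℝ] ℝ}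
    (hn : ∀ i, HasSubgradientAt (fun w : V => ‖w‖ ^ p / p) (ξn i) (wn i)) {R : ℝ}
    (hR : ∀ i, ‖wn i‖ ≤ R) (hB : Tendsto (fun i => (ξn i - ξ) (wn i - w)) l (𝓝 0)) :
    Tendsto (fun i => ‖wn i‖) l (𝓝 ‖w‖) ∧ Tendsto (fun i => ξn i w) l (𝓝 (‖w‖ ^ p)) ∧
      Tendsto (fun i => ξ (wn i)) l (𝓝 (‖w‖ ^ p)) := by
  have hp0 : p ≠ 0 := by linarith
  set a := fun i => ‖wn i‖
  set b := ‖w‖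
  have hdecomp : ∀ i, (ξn i - ξ) (wn i - w) = (a i ^ (p - 1) * b - ξn i w)
      + (b ^ (p - 1) * a i - ξ (wn i)) + (a i ^ (p - 1) - b ^ (p - 1)) * (a i - b) := by
    intro i
    rw [sub_apply, map_sub, map_sub, (hn i).apply_self hp, h.apply_self hp,
      ← Real.rpow_sub_one_mul_self (norm_nonneg _) hp0,
      ← Real.rpow_sub_one_mul_self (norm_nonneg w) hp0]
    ring
  have hgap₁ i : 0 ≤ a i ^ (p - 1) * b - ξn i w :=
    sub_nonneg.2 ((hn i).apply_le_rpow_mul_norm hp w)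
  have hgap₂ i : 0 ≤ b ^ (p - 1) * a i - ξ (wn i) :=
    sub_nonneg.2 (h.apply_le_rpow_mul_norm hp (wn i))
  have hgap₃ i : 0 ≤ (a i ^ (p - 1) - b ^ (p - 1)) * (a i - b) :=
    Real.rpow_sub_rpow_mul_sub_nonneg (norm_nonneg _) (norm_nonneg w) (by linarith)
  have ha : Tendsto a l (𝓝 b) :=
    tendsto_of_rpow_sub_rpow_mul_sub_tendsto_zero (norm_nonneg w) (by linarith)
      (fun i => ⟨norm_nonneg _, hR i⟩)
      (squeeze_zero hgap₃ (fun i => by linarith [hdecomp i, hgap₁ i, hgap₂ i]) hB)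
  have hlim₁ : Tendsto (fun i => a i ^ (p - 1) * b - ξn i w) l (𝓝 0) :=
    squeeze_zero hgap₁ (fun i => by linarith [hdecomp i, hgap₂ i, hgap₃ i]) hB
  have hlim₂ : Tendsto (fun i => b ^ (p - 1) * a i - ξ (wn i)) l (𝓝 0) :=
    squeeze_zero hgap₂ (fun i => by linarith [hdecomp i, hgap₁ i, hgap₃ i]) hB
  have hbp : b ^ p = b ^ (p - 1) * b := (Real.rpow_sub_one_mul_self (norm_nonneg w) hp0).symm
  refine ⟨ha, ?_, ?_⟩
  · have := ((((Real.continuous_rpow_const (by linarith : 0 ≤ p - 1)).tendsto b).comp ha).mul_const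
      b).sub hlim₁
    rw [sub_zero, ← hbp] at this
    exact this.congr fun i => sub_sub_cancel _ _
  · have := (ha.const_mul (b ^ (p - 1))).sub hlim₂
    rw [sub_zero, ← hbp] at this
    exact this.congr fun i => sub_sub_cancel _ _

theorem tendsto_apply_of_tendsto_apply_self [StrictConvexSpace ℝ (V →L[ℝ] ℝ)]
    {ξn : ι → V →L[ℝ] ℝ} {r : ι → ℝ} (hξn : ∀ i, ‖ξn i‖ ≤ r i)
    (hr : Tendsto r l (𝓝 (‖w‖ ^ (p - 1)))) (hw : Tendsto (fun i => ξn i w) l (𝓝 (‖w‖ ^ p)))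
    (z : V) : Tendsto (fun i => ξn i z) l (𝓝 (ξ z)) := by
  have hweak : Tendsto (fun i => StrongDual.toWeakDual (ξn i)) l
      (𝓝 (StrongDual.toWeakDual ξ)) := by
    refine WeakDual.tendsto_of_unique_mapClusterPt (R := ‖w‖ ^ (p - 1) + 1)
      ((hr.eventually (gt_mem_nhds (lt_add_one _))).mono fun i hi => (hξn i).trans hi.le)
      fun ζ hζ => ?_
    have := h.eq_of_norm_le_of_apply_self hp (WeakDual.norm_le_of_mapClusterPt hζ hξn hr)
      (WeakDual.apply_eq_of_mapClusterPt hζ hw)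
    rw [← this]
    rfl
  exact ((WeakDual.eval_continuous z).tendsto _).comp hweak

theorem tendsto_apply_of_tendsto_norm [StrictConvexSpace ℝ V]
    (hrefl : Function.Surjective (NormedSpace.inclusionInDoubleDual ℝ V)) {wn : ι → V}
    (ha : Tendsto (fun i => ‖wn i‖) l (𝓝 ‖w‖)) (hξ : Tendsto (fun i => ξ (wn i)) l (𝓝 (‖w‖ ^ p)))
    (g : V →L[ℝ] ℝ) : Tendsto (fun i => g (wn i)) l (𝓝 (g w)) := by
  let J := NormedSpace.inclusionInDoubleDualLi (E := V) ℝ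
  have hweak : Tendsto (fun i => StrongDual.toWeakDual (J (wn i))) l
      (𝓝 (StrongDual.toWeakDual (J w))) := by
    refine WeakDual.tendsto_of_unique_mapClusterPt (R := ‖w‖ + 1)
      ((ha.eventually (gt_mem_nhds (lt_add_one _))).mono fun i hi => (J.norm_map _).trans_le hi.le)
      fun Φ hΦ => ?_
    obtain ⟨x, hx⟩ := hrefl (WeakDual.toStrongDual Φ)
    have hxw : x = w := by
      refine h.eq_of_norm_le_of_apply hp ?_ ?_
      · rw [← J.norm_map x]
        exact (congrArg norm hx).trans_le
          (WeakDual.norm_le_of_mapClusterPt hΦ (fun i => (J.norm_map _).le) ha)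
      · rw [← WeakDual.apply_eq_of_mapClusterPt hΦ hξ]
        exact DFunLike.congr_fun hx ξ
    rw [← hxw]
    exact congrArg StrongDual.toWeakDual hx.symm
  exact ((WeakDual.eval_continuous g).tendsto _).comp hweak

end HasSubgradientAt

section Resolvent

variable {V : Type*} [NormedAddCommGroup V] [NormedSpace ℝ V] {φ : V → ℝ≥0∞} {p lam : ℝ}
  {u v : V} {ξ : V →L[ℝ] ℝ}

theorem ESubgradientAt.sub_apply_sub_nonneg {x y : V} {ξ η : V →L[ℝ] ℝ}
    (hξ : ESubgradientAt φ x ξ) (hη : ESubgradientAt φ y η) : 0 ≤ (ξ - η) (x - y) := by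
  have hx := hξ.2 y hη.1
  have hy := hη.2 x hξ.1
  rw [← neg_sub, map_neg] at hx
  rw [sub_apply]
  linarith

theorem ESubgradientAt.apply_le_toReal_zero (h : ESubgradientAt φ v (-ξ)) (h0 : φ 0 ≠ ⊤) :
    ξ v ≤ (φ 0).toReal := by
  have := h.2 0 h0
  rw [zero_sub, map_neg, neg_apply, neg_neg] at this
  linarith [(φ v).toReal_nonneg]

namespace IsResolventPair

theorem norm_le (hp : 1 < p) (hlam : 0 < lam) (hφ0 : φ 0 ≠ ⊤)
    (h : IsResolventPair p lam φ u v ξ) :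
    ‖lam⁻¹ • (v - u)‖ ≤ max 1 (((φ 0).toReal + ‖u‖) / lam) := by
  set b := ‖lam⁻¹ • (v - u)‖
  have hv : v = u + lam • lam⁻¹ • (v - u) := by rw [smul_inv_smul₀ hlam.ne', add_sub_cancel]
  have hξv : ξ u + lam * b ^ p ≤ (φ 0).toReal := by
    have := h.2.apply_le_toReal_zero hφ0
    rwa [hv, map_add, map_smul, h.1.apply_self hp, smul_eq_mul] at this
  have hξu : -(b ^ (p - 1) * ‖u‖) ≤ ξ u := by
    have := h.1.apply_le_rpow_mul_norm hp (-u)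
    rw [map_neg, norm_neg] at this
    linarith
  rcases le_or_gt b 1 with hb | hb
  · exact le_max_of_le_left hb
  refine le_max_of_le_right ((le_div_iff₀ hlam).2 ?_)
  have hbq : 1 ≤ b ^ (p - 1) := Real.one_le_rpow hb.le (by linarith)
  rw [← Real.rpow_sub_one_mul_self (norm_nonneg _) (by linarith)] at hξv
  have : b ^ (p - 1) * (b * lam) ≤ b ^ (p - 1) * ((φ 0).toReal + ‖u‖) := by
    nlinarith [(φ 0).toReal_nonneg]
  exact le_of_mul_le_mul_left this (by linarith)

theorem lam_mul_sub_apply_sub_le (hlam : lam ≠ 0) {u₁ v₁ u₂ v₂ : V} {ξ₁ ξ₂ : V →L[ℝ] ℝ}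
    (h₁ : IsResolventPair p lam φ u₁ v₁ ξ₁) (h₂ : IsResolventPair p lam φ u₂ v₂ ξ₂) :
    lam * (ξ₁ - ξ₂) (lam⁻¹ • (v₁ - u₁) - lam⁻¹ • (v₂ - u₂)) ≤ (ξ₂ - ξ₁) (u₁ - u₂) := by
  have hmono := h₁.2.sub_apply_sub_nonneg h₂.2
  rw [← smul_eq_mul, ← map_smul, smul_sub, smul_inv_smul₀ hlam, smul_inv_smul₀ hlam]
  simp only [sub_apply, neg_apply, map_sub] at hmono ⊢
  linarith

theorem tendsto_sub_apply_sub (hlam : 0 < lam) {ι : Type*} {l : Filter ι} {un vn : ι → V}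
    {ξn : ι → V →L[ℝ] ℝ} (h : IsResolventPair p lam φ u v ξ)
    (hn : ∀ i, IsResolventPair p lam φ (un i) (vn i) (ξn i)) {K : ℝ} (hK : ∀ i, ‖ξn i‖ ≤ K)
    (hun : Tendsto un l (𝓝 u)) :
    Tendsto (fun i => (ξn i - ξ) (lam⁻¹ • (vn i - un i) - lam⁻¹ • (v - u))) l (𝓝 0) := by
  refine squeeze_zero (fun i => (hn i).1.sub_apply_sub_nonneg h.1)
    (g := fun i => lam⁻¹ * ((K + ‖ξ‖) * ‖un i - u‖)) (fun i => ?_) ?_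
  · have hbound : (ξ - ξn i) (un i - u) ≤ (K + ‖ξ‖) * ‖un i - u‖ := by
      refine (le_abs_self _).trans (((ξ - ξn i).le_opNorm _).trans ?_)
      gcongr
      linarith [norm_sub_le ξ (ξn i), hK i]
    rw [le_inv_mul_iff₀ hlam]
    exact ((hn i).lam_mul_sub_apply_sub_le hlam.ne' h).trans hbound
  · simpa using ((tendsto_iff_norm_sub_tendsto_zero.1 hun).const_mul (K + ‖ξ‖)).const_mul lam⁻¹

end IsResolventPair

end Resolvent

theorem yosida_demicontinuous_general
    {V : Type*} [NormedAddCommGroup V] [NormedSpace ℝ V]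
    [StrictConvexSpace ℝ V] [StrictConvexSpace ℝ (V →L[ℝ] ℝ)]
    (hrefl : Function.Surjective (NormedSpace.inclusionInDoubleDual ℝ V))
    (p lam : ℝ) (hp : 1 < p) (hlam : 0 < lam)
    (φ : V → ℝ≥0∞)
    (hφ0 : φ 0 ≠ ⊤)
    (u : V) (un : ℕ → V) (v : V) (vn : ℕ → V)
    (ξ : V →L[ℝ] ℝ) (ξn : ℕ → V →L[ℝ] ℝ)
    (hun : Tendsto un atTop (nhds u))
    (hpairn : ∀ n, IsResolventPair p lam φ (un n) (vn n) (ξn n))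
    (hpair : IsResolventPair p lam φ u v ξ) :
    (∀ g : V →L[ℝ] ℝ, Tendsto (fun n => g (vn n)) atTop (nhds (g v))) ∧
      (∀ z : V, Tendsto (fun n => ξn n z) atTop (nhds (ξ z))) := by
  obtain ⟨M, hM⟩ : ∃ M, ∀ n, ‖un n‖ ≤ M := by
    obtain ⟨M, hM⟩ := hun.norm.bddAbove_range
    exact ⟨M, fun n => hM ⟨n, rfl⟩⟩
  have hwn n : ‖lam⁻¹ • (vn n - un n)‖ ≤ max 1 (((φ 0).toReal + M) / lam) :=
    ((hpairn n).norm_le hp hlam hφ0).trans (by gcongr; exact hM n)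
  have hξn n : ‖ξn n‖ ≤ ‖lam⁻¹ • (vn n - un n)‖ ^ (p - 1) := (hpairn n).1.norm_le hp
  have hB := hpair.tendsto_sub_apply_sub hlam hpairn
    (fun n => (hξn n).trans (Real.rpow_le_rpow (norm_nonneg _) (hwn n) (by linarith))) hun
  obtain ⟨hnorm, hξnw, hξwn⟩ :=
    hpair.1.tendsto_of_sub_apply_sub_tendsto_zero hp (fun n => (hpairn n).1) hwn hB
  refine ⟨fun g => ?_, hpair.1.tendsto_apply_of_tendsto_apply_self hp hξn
    (((Real.continuous_rpow_const (by linarith)).tendsto _).comp hnorm) hξnw⟩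
  have hv (x y : V) : g y = g x + lam * g (lam⁻¹ • (y - x)) := by
    rw [map_smul, smul_eq_mul, mul_inv_cancel_left₀ hlam.ne', map_sub, add_sub_cancel]
  rw [hv u v]
  exact (((g.continuous.tendsto u).comp hun).add
    ((hpair.1.tendsto_apply_of_tendsto_norm hp hrefl hnorm hξwn g).const_mul lam)).congr
    fun n => (hv (un n) (vn n)).symm

/-- **Demicontinuity of the Yosida approximation.** -/
theorem yosida_demicontinuous
    {V : Type*} [NormedAddCommGroup V] [NormedSpace ℝ V]
    [TopologicalSpace.SeparableSpace V]
    [StrictConvexSpace ℝ V] [StrictConvexSpace ℝ (V →L[ℝ] ℝ)]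
    (hrefl : Function.Surjective (NormedSpace.inclusionInDoubleDual ℝ V))
    (p lam : ℝ) (hp : 1 < p) (hlam : 0 < lam)
    (φ : V → ℝ≥0∞) (hφproper : ∃ v, φ v ≠ ⊤)
    (hφlsc : LowerSemicontinuous φ)
    (hφconv : ∀ u v : V, ∀ a b : ℝ, 0 ≤ a → 0 ≤ b → a + b = 1 →
      φ (a • u + b • v) ≤ ENNReal.ofReal a * φ u + ENNReal.ofReal b * φ v)
    (hφ0 : φ 0 ≠ ⊤)
    (u : V) (un : ℕ → V) (v : V) (vn : ℕ → V)
    (ξ : V →L[ℝ] ℝ) (ξn : ℕ → V →L[ℝ] ℝ)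
    (hun : Tendsto un atTop (nhds u))
    (hpairn : ∀ n, IsResolventPair p lam φ (un n) (vn n) (ξn n))
    (hpair : IsResolventPair p lam φ u v ξ) :
    (∀ g : V →L[ℝ] ℝ, Tendsto (fun n => g (vn n)) atTop (nhds (g v))) ∧
      (∀ z : V, Tendsto (fun n => ξn n z) atTop (nhds (ξ z))) :=
  yosida_demicontinuous_general hrefl p lam hp hlam φ hφ0 u un v vn ξ ξn hun hpairn hpair
end
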